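/- arXiv:1511.07218 — 5 statements merged into one kernel-verified Lean document; each statement's English description precedes it below -/
import Mathlib

section
/- Suppose that for every u ∈ ℝⁿ the limit C_i(u) := lim_{t→∞} f_i(t H_i u)/t exists and is finite, and define h_i(u,v,t) := (f_i(v + t H_i u) − f_i(v))/t for t > 0. Then on every compact subset K ⊆ ℝⁿ × ℝ^{m_i}, the convergence h_i(u,v,t) → C_i(u) as t → ∞ is uniform in (u,v) ∈ K: for every δ > 0 there is an N such that for all t ≥ N and all (u,v) ∈ K, |h_i(u,v,t) − C_i(u)| ≤ δ. -/
/-!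
For convex `f` the slope `t ↦ (f (v + t • w) - f v) / t` along a ray is nondecreasing on
`(0, ∞)`, and the midpoint inequalities through `-v` and through `2 • v` squeeze it between two
quantities that tend to `c = lim f (t • w) / t`; so it increases to `c` pointwise. The limit `C` is
convex as a pointwise limit of convex functions, hence continuous in finite dimension, and Dini's
theorem turns monotone pointwise convergence of continuous functions into uniform convergence on
compact sets.
-/

open Filter Set Topology

section VectorSpace

variable {X E : Type*} [AddCommGroup X] [Module ℝ X] [AddCommGroup E] [Module ℝ E] {f : E → ℝ}

noncomputable def raySlope (f : E → ℝ) (v w : E) (t : ℝ) : ℝ :=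
  (f (v + t • w) - f v) / t

lemma ConvexOn.monotoneOn_raySlope (hf : ConvexOn ℝ univ f) (v w : E) :
    MonotoneOn (raySlope f v w) (Ioi 0) := by
  intro s hs t ht hst
  have hline : ConvexOn ℝ univ (fun r : ℝ => f (v + r • w)) := by
    have := (hf.translate_right v).comp_linearMap (LinearMap.toSpanSingleton ℝ E w)
    rwa [preimage_univ, preimage_univ] at this
  simpa [raySlope] using hline.secant_mono (a := 0) trivial trivial trivial hs.ne' ht.ne' hst

lemma ConvexOn.two_mul_map_half_smul_add_le (hf : ConvexOn ℝ univ f) (x y : E) :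
    2 * f ((2 : ℝ)⁻¹ • (x + y)) ≤ f x + f y := by
  have := hf.2 (mem_univ x) (mem_univ y) (by norm_num : (0 : ℝ) ≤ 2⁻¹)
    (by norm_num : (0 : ℝ) ≤ 2⁻¹) (by norm_num)
  rw [smul_eq_mul, smul_eq_mul] at this
  rw [smul_add]
  linarith

lemma ConvexOn.tendsto_raySlope (hf : ConvexOn ℝ univ f) {w : E} {c : ℝ}
    (hc : Tendsto (fun t : ℝ => f (t • w) / t) atTop (𝓝 c)) (v : E) :
    Tendsto (raySlope f v w) atTop (𝓝 c) := by
  have hhalf : Tendsto (fun t : ℝ => t / 2) atTop atTop := tendsto_id.atTop_div_const two_pos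
  have hdouble : Tendsto (fun t : ℝ => 2 * t) atTop atTop := tendsto_id.const_mul_atTop two_pos
  have hlower :
      Tendsto (fun t => f ((t / 2) • w) / (t / 2) - (f (-v) + f v) / t) atTop (𝓝 c) := by
    simpa using (hc.comp hhalf).sub (tendsto_const_nhds.div_atTop tendsto_id)
  have hupper : Tendsto (fun t => f ((2 * t) • w) / (2 * t) + (f ((2 : ℝ) • v) - 2 * f v) / (2 * t))
      atTop (𝓝 c) := by
    simpa using (hc.comp hdouble).add (tendsto_const_nhds.div_atTop hdouble)
  refine tendsto_of_tendsto_of_tendsto_of_le_of_le' hlower hupper ?_ ?_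
  all_goals filter_upwards [eventually_gt_atTop 0] with t ht
  · have hmid := hf.two_mul_map_half_smul_add_le (-v) (v + t • w)
    rw [show (2 : ℝ)⁻¹ • (-v + (v + t • w)) = (t / 2) • w by module] at hmid
    calc f ((t / 2) • w) / (t / 2) - (f (-v) + f v) / t
        = (2 * f ((t / 2) • w) - (f (-v) + f v)) / t := by field_simp
      _ ≤ raySlope f v w t := div_le_div_of_nonneg_right (by linarith) ht.le
  · have hmid := hf.two_mul_map_half_smul_add_le ((2 : ℝ) • v) ((2 * t) • w)
    rw [show (2 : ℝ)⁻¹ • ((2 : ℝ) • v + (2 * t) • w) = v + t • w by module] at hmid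
    calc raySlope f v w t = (2 * f (v + t • w) - 2 * f v) / (2 * t) := by
          rw [raySlope]; field_simp
      _ ≤ (f ((2 : ℝ) • v) + f ((2 * t) • w) - 2 * f v) / (2 * t) :=
          div_le_div_of_nonneg_right (by linarith) (by positivity)
      _ = f ((2 * t) • w) / (2 * t) + (f ((2 : ℝ) • v) - 2 * f v) / (2 * t) := by ring

lemma convexOn_of_tendsto {ι : Type*} {l : Filter ι} [l.NeBot] {s : Set E} {F : ι → E → ℝ}
    {g : E → ℝ} (hs : Convex ℝ s) (hF : ∀ᶠ i in l, ConvexOn ℝ s (F i))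
    (hg : ∀ x ∈ s, Tendsto (F · x) l (𝓝 (g x))) : ConvexOn ℝ s g :=
  ⟨hs, fun x hx y hy a b ha hb hab =>
    le_of_tendsto_of_tendsto (hg _ (hs hx hy ha hb hab))
      (((hg x hx).const_smul a).add ((hg y hy).const_smul b))
      (hF.mono fun _ hi => hi.2 hx hy ha hb hab)⟩

lemma ConvexOn.convexOn_of_tendsto_div (hf : ConvexOn ℝ univ f) (L : X →ₗ[ℝ] E) {c : X → ℝ}
    (hc : ∀ x, Tendsto (fun t : ℝ => f (t • L x) / t) atTop (𝓝 (c x))) :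
    ConvexOn ℝ univ c := by
  refine convexOn_of_tendsto convex_univ ?_ fun x _ => hc x
  filter_upwards [eventually_ge_atTop 0] with t ht
  simpa [div_eq_inv_mul] using (hf.comp_linearMap (t • L)).smul (inv_nonneg.2 ht)

end VectorSpace

theorem ConvexOn.tendstoUniformlyOn_raySlope {X E : Type*} [NormedAddCommGroup X]
    [NormedSpace ℝ X] [FiniteDimensional ℝ X] [NormedAddCommGroup E] [NormedSpace ℝ E]
    [FiniteDimensional ℝ E] {f : E → ℝ} (hf : ConvexOn ℝ univ f) (L : X →ₗ[ℝ] E) {c : X → ℝ}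
    (hc : ∀ x, Tendsto (fun t : ℝ => f (t • L x) / t) atTop (𝓝 (c x)))
    {K : Set (X × E)} (hK : IsCompact K) :
    TendstoUniformlyOn (fun (t : Ioi (0 : ℝ)) (p : X × E) => raySlope f p.2 (L p.1) t)
      (fun p => c p.1) atTop K := by
  have hf_cont : Continuous f := continuousOn_univ.1 (hf.continuousOn isOpen_univ)
  have hc_cont : Continuous c :=
    continuousOn_univ.1 ((hf.convexOn_of_tendsto_div L hc).continuousOn isOpen_univ)
  have hL_cont : Continuous L := L.continuous_of_finiteDimensional
  refine Monotone.tendstoUniformlyOn_of_forall_tendsto hK (fun t => ?_)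
    (fun p _ s t hst => hf.monotoneOn_raySlope p.2 (L p.1) s.2 t.2 hst)
    (hc_cont.comp continuous_fst).continuousOn
    (fun p _ => tendsto_comp_val_Ioi_atTop.2 (hf.tendsto_raySlope (hc p.1) p.2))
  unfold raySlope
  fun_prop

theorem h_tendstoUniformly_C_on_compact_general (n mi : ℕ)
    (H : Matrix (Fin mi) (Fin n) ℝ) (f : (Fin mi → ℝ) → ℝ)
    (hconv : ConvexOn ℝ Set.univ f)
    (C : EuclideanSpace ℝ (Fin n) → ℝ)
    (hC : ∀ u : EuclideanSpace ℝ (Fin n),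
      Filter.Tendsto (fun t : ℝ => f (t • H.mulVec u) / t) Filter.atTop (nhds (C u))) :
    ∀ K : Set (EuclideanSpace ℝ (Fin n) × (Fin mi → ℝ)), IsCompact K →
      ∀ δ : ℝ, 0 < δ → ∃ N : ℝ, ∀ t : ℝ, N ≤ t → ∀ uv ∈ K,
        |(f (uv.2 + t • H.mulVec uv.1) - f uv.2) / t - C uv.1| ≤ δ := by
  intro K hK δ hδ
  let L := (Matrix.toLin' H).comp (WithLp.linearEquiv 2 ℝ (Fin n → ℝ)).toLinearMap
  obtain ⟨N, hN⟩ := eventually_atTop.1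
    (Metric.tendstoUniformlyOn_iff.1 (hconv.tendstoUniformlyOn_raySlope L hC hK) δ hδ)
  refine ⟨N, fun t ht uv huv => ?_⟩
  have := hN ⟨t, N.2.trans_le ht⟩ ht uv huv
  rw [Real.dist_eq, abs_sub_comm] at this
  exact this.le

/-- Lemma 2 (ii), uniform convergence part: the convergence of
`h (u, v, t) = (f (v + t • H u) - f v) / t` to `C u` is uniform in `(u, v)`
on every compact subset of `ℝⁿ × ℝ^{mi}`. -/
theorem h_tendstoUniformly_C_on_compact (n mi : ℕ)
    (H : Matrix (Fin mi) (Fin n) ℝ) (f : (Fin mi → ℝ) → ℝ)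
    (hconv : ConvexOn ℝ Set.univ f)
    (hsym : ∀ u, f u = f (-u))
    (hnonneg : ∀ u, 0 ≤ f u)
    (hzero : f 0 = 0)
    (C : EuclideanSpace ℝ (Fin n) → ℝ)
    (hC : ∀ u : EuclideanSpace ℝ (Fin n),
      Filter.Tendsto (fun t : ℝ => f (t • H.mulVec u) / t) Filter.atTop (nhds (C u))) :
    ∀ K : Set (EuclideanSpace ℝ (Fin n) × (Fin mi → ℝ)), IsCompact K →
      ∀ δ : ℝ, 0 < δ → ∃ N : ℝ, ∀ t : ℝ, N ≤ t → ∀ uv ∈ K,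
        |(f (uv.2 + t • H.mulVec uv.1) - f uv.2) / t - C uv.1| ≤ δ :=
  h_tendstoUniformly_C_on_compact_general n mi H f hconv C hC
end

section
/- Suppose that for every u ∈ ℝⁿ the limit C_i(u) := lim_{t→∞} f_i(t H_i u)/t exists and is finite. Then for every v ∈ ℝ^{m_i} and every δ > 0 there exists N such that for all t ≥ N and all u ∈ ℝⁿ with ‖u‖ = 1, f_i(v + (t+1) H_i u) − f_i(v + t H_i u) ≥ C_i(u) − δ. -/
/-!
For `w = H u` the slopes `s ↦ f (s • w) / s` increase to `C u`; since `C` is a limit of convex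
functions it is convex, hence continuous, and Dini's theorem makes the convergence uniform on the
unit sphere. Along the line `s ↦ v + s • w` convexity bounds the increment from below by the secant
slope `(f (v + t • w) - f v) / t`, and evenness gives `2 f ((t / 2) • w) ≤ f (v + t • w) + f v`;
together the increment is at least `f ((t / 2) • w) / (t / 2) - 2 f v / t`, which is eventually
above `C u - δ` uniformly in `u`.
-/

open Filter Set Topology

section Convex

variable {E : Type*} [AddCommGroup E] [Module ℝ E] {f : E → ℝ}

theorem ConvexOn.of_tendsto {ι : Type*} {l : Filter ι} [l.NeBot] {s : Set E} {F : ι → E → ℝ}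
    {g : E → ℝ} (hs : Convex ℝ s) (hF : ∀ᶠ i in l, ConvexOn ℝ s (F i))
    (hlim : ∀ x ∈ s, Tendsto (F · x) l (𝓝 (g x))) : ConvexOn ℝ s g := by
  refine ⟨hs, fun x hx y hy a b ha hb hab ↦ ?_⟩
  refine le_of_tendsto_of_tendsto (hlim _ (hs hx hy ha hb hab))
    (((hlim x hx).const_smul a).add ((hlim y hy).const_smul b)) ?_
  filter_upwards [hF] with i hi using hi.2 hx hy ha hb hab

theorem ConvexOn.comp_line (hf : ConvexOn ℝ univ f) (v w : E) :
    ConvexOn ℝ univ fun s : ℝ ↦ f (v + s • w) := by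
  refine ⟨convex_univ, fun a _ b _ p q hp hq hpq ↦ ?_⟩
  have h := hf.2 (mem_univ (v + a • w)) (mem_univ (v + b • w)) hp hq hpq
  convert h using 2
  rw [smul_add, smul_add, add_add_add_comm, ← add_smul, hpq, one_smul, smul_smul, smul_smul,
    ← add_smul, smul_eq_mul, smul_eq_mul]

theorem ConvexOn.div_smul_monotoneOn (hf : ConvexOn ℝ univ f) (hf0 : f 0 = 0) (w : E) :
    MonotoneOn (fun s : ℝ ↦ f (s • w) / s) (Ioi 0) := by
  intro s hs t ht hst
  simpa [hf0] using (hf.comp_line 0 w).secant_mono (mem_univ 0) (mem_univ s) (mem_univ t)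
    (ne_of_gt hs) (ne_of_gt ht) hst

theorem ConvexOn.convexOn_of_tendsto_div_smul (hf : ConvexOn ℝ univ f) {C : E → ℝ}
    (hC : ∀ u, Tendsto (fun t : ℝ ↦ f (t • u) / t) atTop (𝓝 (C u))) : ConvexOn ℝ univ C := by
  refine .of_tendsto convex_univ ?_ fun u _ ↦ hC u
  filter_upwards [eventually_gt_atTop 0] with t ht
  have h := (hf.comp_linearMap (t • LinearMap.id)).smul (inv_nonneg.2 ht.le)
  simp only [preimage_univ, Function.comp_def, LinearMap.smul_apply, LinearMap.id_apply,
    smul_eq_mul, ← div_eq_inv_mul] at h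
  exact h

theorem ConvexOn.slope_le_increment (hf : ConvexOn ℝ univ f) (v w : E) {t : ℝ} (ht : 0 < t) :
    (f (v + t • w) - f v) / t ≤ f (v + (t + 1) • w) - f (v + t • w) := by
  simpa using (hf.comp_line v w).slope_mono_adjacent (mem_univ 0) (mem_univ (t + 1)) ht
    (lt_add_one t)

theorem ConvexOn.two_mul_half_smul_sub_le (hf : ConvexOn ℝ univ f) (heven : Function.Even f)
    (x y : E) : 2 * f ((2 : ℝ)⁻¹ • (x - y)) ≤ f x + f y := by
  have h := hf.2 (mem_univ x) (mem_univ (-y)) (by norm_num : (0 : ℝ) ≤ 2⁻¹)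
    (by norm_num : (0 : ℝ) ≤ 2⁻¹) (by norm_num)
  rw [heven, ← smul_add, ← sub_eq_add_neg, smul_eq_mul, smul_eq_mul] at h
  linarith

theorem ConvexOn.div_half_smul_sub_le_increment (hf : ConvexOn ℝ univ f) (heven : Function.Even f)
    (v w : E) {t : ℝ} (ht : 0 < t) :
    f ((t / 2) • w) / (t / 2) - 2 * f v / t ≤ f (v + (t + 1) • w) - f (v + t • w) := by
  have hmid := hf.two_mul_half_smul_sub_le heven (v + t • w) v
  rw [add_sub_cancel_left, smul_smul, inv_mul_eq_div] at hmid
  calc f ((t / 2) • w) / (t / 2) - 2 * f v / t = (2 * f ((t / 2) • w) - 2 * f v) / t := by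
        field_simp
    _ ≤ (f (v + t • w) - f v) / t := div_le_div_of_nonneg_right (by linarith) ht.le
    _ ≤ _ := hf.slope_le_increment v w ht

end Convex

theorem ConvexOn.eventually_forall_sub_lt_div_smul {E : Type*} [NormedAddCommGroup E]
    [NormedSpace ℝ E] [FiniteDimensional ℝ E] {f C : E → ℝ} (hf : ConvexOn ℝ univ f)
    (hf0 : f 0 = 0) (hC : ∀ u, Tendsto (fun t : ℝ ↦ f (t • u) / t) atTop (𝓝 (C u)))
    {K : Set E} (hK : IsCompact K) {δ : ℝ} (hδ : 0 < δ) :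
    ∀ᶠ t in atTop, ∀ u ∈ K, C u - δ < f (t • u) / t := by
  -- Dini's theorem needs monotonicity on the whole index type: sample the slopes at `k + 1`.
  set F : ℕ → E → ℝ := fun k u ↦ f (((k : ℝ) + 1) • u) / ((k : ℝ) + 1)
  have hF : TendstoUniformlyOn F C atTop K := by
    refine Monotone.tendstoUniformlyOn_of_forall_tendsto hK (fun k ↦ ?_) (fun u _ k l hkl ↦ ?_)
      (hf.convexOn_of_tendsto_div_smul hC).locallyLipschitz.continuous.continuousOn
      (fun u _ ↦ (hC u).comp (tendsto_atTop_add_const_right _ 1 tendsto_natCast_atTop_atTop))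
    · exact ((hf.locallyLipschitz.continuous.comp (continuous_const_smul _)).div_const _).continuousOn
    · exact hf.div_smul_monotoneOn hf0 u (show (0 : ℝ) < k + 1 by positivity)
        (show (0 : ℝ) < l + 1 by positivity) (by gcongr)
  obtain ⟨k, hk⟩ := (Metric.tendstoUniformlyOn_iff.1 hF δ hδ).exists
  filter_upwards [eventually_ge_atTop ((k : ℝ) + 1)] with t ht u hu
  have hdist := hk u hu
  rw [Real.dist_eq, abs_lt] at hdist
  have := hf.div_smul_monotoneOn hf0 u (show (0 : ℝ) < k + 1 by positivity)
    (show (0 : ℝ) < t by linarith [k.cast_nonneg (α := ℝ)]) ht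
  simp only [F] at hdist
  linarith

theorem increment_ge_C_sub_delta_general (n mi : ℕ)
    (H : Matrix (Fin mi) (Fin n) ℝ) (f : (Fin mi → ℝ) → ℝ)
    (hconv : ConvexOn ℝ Set.univ f)
    (hsym : ∀ u, f u = f (-u))
    (hzero : f 0 = 0)
    (C : EuclideanSpace ℝ (Fin n) → ℝ)
    (hC : ∀ u : EuclideanSpace ℝ (Fin n),
      Filter.Tendsto (fun t : ℝ => f (t • H.mulVec u) / t) Filter.atTop (nhds (C u))) :
    ∀ (v : Fin mi → ℝ) (δ : ℝ), 0 < δ → ∃ N : ℝ, ∀ t : ℝ, N ≤ t →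
      ∀ u : EuclideanSpace ℝ (Fin n), ‖u‖ = 1 →
        C u - δ ≤ f (v + (t + 1) • H.mulVec u) - f (v + t • H.mulVec u) := by
  intro v δ hδ
  set A : EuclideanSpace ℝ (Fin n) →ₗ[ℝ] Fin mi → ℝ :=
    Matrix.toLin' H ∘ₗ (WithLp.linearEquiv 2 ℝ (Fin n → ℝ)).toLinearMap
  have hslope : ∀ᶠ s in atTop, ∀ u ∈ Metric.sphere 0 1, C u - δ / 2 < f (s • H.mulVec u) / s := by
    simpa [A] using (hconv.comp_linearMap A).eventually_forall_sub_lt_div_smul (by simp [hzero])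
      (fun u ↦ by simpa [A] using hC u) (isCompact_sphere 0 1) (half_pos hδ)
  have hv : ∀ᶠ t in atTop, 2 * f v / t < δ / 2 :=
    (tendsto_const_nhds.div_atTop tendsto_id).eventually (gt_mem_nhds (half_pos hδ))
  have hhalf : Tendsto (fun t : ℝ ↦ t / 2) atTop atTop := tendsto_id.atTop_div_const two_pos
  obtain ⟨N, hN⟩ := eventually_atTop.1 ((hhalf.eventually hslope).and
    (hv.and (eventually_gt_atTop 0)))
  refine ⟨N, fun t ht u hu ↦ ?_⟩
  obtain ⟨hslope_t, hv_t, ht0⟩ := hN t ht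
  have hslope_u := hslope_t u (mem_sphere_zero_iff_norm.2 hu)
  linarith [hconv.div_half_smul_sub_le_increment (fun u ↦ (hsym u).symm) v (H.mulVec u) ht0]

/-- For every `v` and `δ > 0` there exists `N` such that for all `t ≥ N` and all
unit vectors `u`, `f (v + (t+1) • H u) - f (v + t • H u) ≥ C u - δ`. -/
theorem increment_ge_C_sub_delta (n mi : ℕ)
    (H : Matrix (Fin mi) (Fin n) ℝ) (f : (Fin mi → ℝ) → ℝ)
    (hconv : ConvexOn ℝ Set.univ f)
    (hsym : ∀ u, f u = f (-u))
    (hnonneg : ∀ u, 0 ≤ f u)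
    (hzero : f 0 = 0)
    (C : EuclideanSpace ℝ (Fin n) → ℝ)
    (hC : ∀ u : EuclideanSpace ℝ (Fin n),
      Filter.Tendsto (fun t : ℝ => f (t • H.mulVec u) / t) Filter.atTop (nhds (C u))) :
    ∀ (v : Fin mi → ℝ) (δ : ℝ), 0 < δ → ∃ N : ℝ, ∀ t : ℝ, N ≤ t →
      ∀ u : EuclideanSpace ℝ (Fin n), ‖u‖ = 1 →
        C u - δ ≤ f (v + (t + 1) • H.mulVec u) - f (v + t • H.mulVec u) :=
  increment_ge_C_sub_delta_general n mi H f hconv hsym hzero C hC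
end

section
/- (Necessary condition for robustness.) Suppose that for all i ∈ {1,…,m} and all u ∈ ℝⁿ the limit C_i(u) := lim_{t→∞} f_i(t H_i u)/t exists and is finite, but there exist u₀ ∈ ℝⁿ with ‖u₀‖ = 1 and an index set I₀ ⊆ {1,…,m} with |I₀| = p such that Σ_{i∈I₀} C_i(u₀) > Σ_{i∉I₀} C_i(u₀). Then for every z = (z_1,…,z_m) and every r > 0 there exists a (p,m)-sparse attack a supported on I₀ such that, writing y_i = z_i + a_i, every x̂ ∈ ℝⁿ with ‖x̂‖ ≤ r satisfies Σ_{i=1}^m f_i(y_i − H_i(x̂ + u₀)) < Σ_{i=1}^m f_i(y_i − H_i x̂); in particular no minimizer of x̂ ↦ Σ_{i=1}^m f_i(y_i − H_i x̂) has norm at most r. -/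
/-!
For a convex `f` and a direction `w` with recession slope `c = lim f (t • w) / t`, every increment
`f (x + w) - f x` is at most `c`, while far out along `w` the increments are at least `c - ε`,
uniformly for `x` in a compact set. The attack moves the measurements of the sensors in `I₀` to
`T • H i u₀` with `T` large. Replacing `x̂` by `x̂ + u₀` then lowers the cost of each sensor in `I₀`
by almost `C i u₀`, and raises the cost of every other sensor by at most `C i u₀` (its residual
moves along `-H i u₀`, whose recession slope is `C i u₀` by symmetry of `f i`); the violated
inequality makes the net change negative.
-/

open Filter Set Topology

section ConvexRecession

variable {E : Type*} [AddCommGroup E] [Module ℝ E] {f : E → ℝ}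

lemma ConvexOn.map_add_sub_le_div (hf : ConvexOn ℝ univ f) (x d : E) {t : ℝ} (ht : 1 ≤ t) :
    f (x + d) - f x ≤ (f (x + t • d) - f x) / t := by
  have ht0 : 0 < t := by linarith
  have hconv := hf.2 (mem_univ (x + t • d)) (mem_univ x) (inv_nonneg.2 ht0.le)
    (sub_nonneg.2 (inv_le_one_of_one_le₀ ht)) (add_sub_cancel _ _)
  have hcomb : t⁻¹ • (x + t • d) + (1 - t⁻¹) • x = x + d := by
    rw [smul_add, smul_smul, inv_mul_cancel₀ ht0.ne', one_smul, sub_smul, one_smul]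
    abel
  rw [hcomb, smul_eq_mul, smul_eq_mul] at hconv
  rw [le_div_iff₀ ht0]
  have := mul_le_mul_of_nonneg_right hconv ht0.le
  field_simp at this
  linarith

lemma ConvexOn.map_half_add_half_le (hf : ConvexOn ℝ univ f) (x y : E) :
    f ((1 / 2 : ℝ) • x + (1 / 2 : ℝ) • y) ≤ (f x + f y) / 2 := by
  have := hf.2 (mem_univ x) (mem_univ y) (by norm_num : (0 : ℝ) ≤ 1 / 2)
    (by norm_num : (0 : ℝ) ≤ 1 / 2) (add_halves 1)
  simp only [smul_eq_mul] at this
  linarith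

lemma ConvexOn.map_add_le_of_tendsto (hf : ConvexOn ℝ univ f) {w : E} {c : ℝ}
    (hw : Tendsto (fun t : ℝ => f (t • w) / t) atTop (𝓝 c)) (x : E) :
    f (x + w) ≤ f x + c := by
  have hbound : ∀ t : ℝ, 1 ≤ t →
      f (x + w) - f x ≤ (f ((2 : ℝ) • x) / 2 - f x) / t + f ((2 * t) • w) / (2 * t) := by
    intro t ht
    have hmid := hf.map_half_add_half_le ((2 : ℝ) • x) ((2 * t) • w)
    rw [smul_smul, smul_smul, show 1 / 2 * (2 : ℝ) = 1 by norm_num, one_smul,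
      show 1 / 2 * (2 * t) = t by ring] at hmid
    have ht0 : 0 < t := by linarith
    calc f (x + w) - f x ≤ (f (x + t • w) - f x) / t := hf.map_add_sub_le_div x w ht
      _ ≤ ((f ((2 : ℝ) • x) + f ((2 * t) • w)) / 2 - f x) / t := by gcongr
      _ = _ := by field_simp; ring
  have hlim : Tendsto (fun t : ℝ => (f ((2 : ℝ) • x) / 2 - f x) / t + f ((2 * t) • w) / (2 * t))
      atTop (𝓝 (0 + c)) :=
    (tendsto_const_nhds.div_atTop tendsto_id).add
      (hw.comp (tendsto_id.const_mul_atTop two_pos))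
  have := ge_of_tendsto hlim (eventually_atTop.2 ⟨1, hbound⟩)
  linarith

lemma ConvexOn.two_mul_sub_le_map_sub (hf : ConvexOn ℝ univ f) (x v : E) :
    2 * f x - (f ((2 : ℝ) • x) + f ((2 : ℝ) • v)) / 2 ≤ f (x - v) := by
  have hx := hf.map_half_add_half_le (x - v) (x + v)
  have hxv := hf.map_half_add_half_le ((2 : ℝ) • x) ((2 : ℝ) • v)
  rw [show (1 / 2 : ℝ) • (x - v) + (1 / 2 : ℝ) • (x + v) = x by module] at hx
  rw [show (1 / 2 : ℝ) • (2 : ℝ) • x + (1 / 2 : ℝ) • (2 : ℝ) • v = x + v by module] at hxv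
  linarith

end ConvexRecession

lemma ConvexOn.eventually_lt_map_sub_map_sub_of_tendsto {E : Type*} [NormedAddCommGroup E]
    [NormedSpace ℝ E] [FiniteDimensional ℝ E] {f : E → ℝ} (hf : ConvexOn ℝ univ f) {w : E}
    {c c' : ℝ} (hw : Tendsto (fun t : ℝ => f (t • w) / t) atTop (𝓝 c)) (hc' : c' < c)
    {S : Set E} (hS : IsCompact S) :
    ∀ᶠ t : ℝ in atTop, ∀ v ∈ S, c' < f (t • w - v) - f (t • w - v - w) := by
  have hfc : Continuous f := continuousOn_univ.mp (hf.continuousOn isOpen_univ)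
  obtain ⟨M, hM⟩ : BddAbove ((fun v => f ((2 : ℝ) • v) / 2 + f (-v)) '' S) :=
    hS.bddAbove_image (by fun_prop)
  have hlim : Tendsto (fun t : ℝ => 2 * (f (t • w) / t) - f ((2 * t) • w) / (2 * t) - M / t)
      atTop (𝓝 (2 * c - c - 0)) :=
    ((hw.const_mul 2).sub (hw.comp (tendsto_id.const_mul_atTop two_pos))).sub
      (tendsto_const_nhds.div_atTop tendsto_id)
  rw [show 2 * c - c - 0 = c by ring] at hlim
  filter_upwards [eventually_ge_atTop (1 : ℝ), hlim.eventually (eventually_gt_nhds hc')]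
    with t ht hc't v hv
  have ht0 : 0 < t := by linarith
  have hfar := hf.two_mul_sub_le_map_sub (t • w) v
  rw [smul_smul] at hfar
  have hMv : f ((2 : ℝ) • v) / 2 + f (-v) ≤ M := hM ⟨v, hv, rfl⟩
  -- convexity on the segment from `-v` to `t • w - v`: its last unit step is the steepest
  have hslope := hf.map_add_sub_le_div (t • w - v) (-w) ht
  rw [← sub_eq_add_neg, show t • w - v + t • -w = -v by rw [smul_neg]; abel] at hslope
  calc c' < 2 * (f (t • w) / t) - f ((2 * t) • w) / (2 * t) - M / t := hc't
    _ = (2 * f (t • w) - f ((2 * t) • w) / 2 - M) / t := by field_simp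
    _ ≤ (f (t • w - v) - f (-v)) / t := div_le_div_of_nonneg_right (by linarith) ht0.le
    _ ≤ f (t • w - v) - f (t • w - v - w) := by
      rw [show (f (t • w - v) - f (-v)) / t = -((f (-v) - f (t • w - v)) / t) by ring]
      linarith

lemma Finset.sum_lt_sum_of_le_add_of_add_le {ι : Type*} [Fintype ι] [DecidableEq ι]
    (I : Finset ι) {g h c c' : ι → ℝ} (hout : ∀ i ∉ I, g i ≤ h i + c i)
    (hin : ∀ i ∈ I, g i + c' i ≤ h i) (hlt : ∑ i ∈ Iᶜ, c i < ∑ i ∈ I, c' i) :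
    ∑ i, g i < ∑ i, h i := by
  have hsum_out := Finset.sum_le_sum fun i hi => hout i (Finset.mem_compl.1 hi)
  have hsum_in := Finset.sum_le_sum hin
  rw [Finset.sum_add_distrib] at hsum_out hsum_in
  rw [← Finset.sum_add_sum_compl I g, ← Finset.sum_add_sum_compl I h]
  linarith

lemma Finset.exists_pos_lt_sum_sub_of_lt {ι : Type*} {s t : Finset ι} {c : ι → ℝ}
    (h : ∑ i ∈ t, c i < ∑ i ∈ s, c i) : ∃ δ > 0, ∑ i ∈ t, c i < ∑ i ∈ s, (c i - δ) := by
  have hgap := sub_pos.2 h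
  refine ⟨(∑ i ∈ s, c i - ∑ i ∈ t, c i) / (s.card + 1), by positivity, ?_⟩
  rw [Finset.sum_sub_distrib, Finset.sum_const, nsmul_eq_mul, mul_div_assoc',
    lt_sub_iff_add_lt, ← lt_sub_iff_add_lt', div_lt_iff₀ (by positivity)]
  nlinarith

theorem necessary_condition_for_robustness_general (n m : ℕ)
    (mi : Fin m → ℕ)
    (H : ∀ i : Fin m, Matrix (Fin (mi i)) (Fin n) ℝ)
    (f : ∀ i : Fin m, (Fin (mi i) → ℝ) → ℝ)
    (hconv : ∀ i, ConvexOn ℝ Set.univ (f i))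
    (hsym : ∀ i u, f i u = f i (-u))
    (C : Fin m → EuclideanSpace ℝ (Fin n) → ℝ)
    (hC : ∀ (i : Fin m) (u : EuclideanSpace ℝ (Fin n)),
      Filter.Tendsto (fun t : ℝ => f i (t • (H i).mulVec u) / t) Filter.atTop (nhds (C i u)))
    (u₀ : EuclideanSpace ℝ (Fin n))
    (I₀ : Finset (Fin m))
    (hviol : ∑ i ∈ I₀ᶜ, C i u₀ < ∑ i ∈ I₀, C i u₀) :
    ∀ (z : ∀ i : Fin m, Fin (mi i) → ℝ) (r : ℝ), 0 < r →
      ∃ a : ∀ i : Fin m, Fin (mi i) → ℝ,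
        (∀ i ∉ I₀, a i = 0) ∧
        (∀ xhat : EuclideanSpace ℝ (Fin n), ‖xhat‖ ≤ r →
          ∑ i, f i (z i + a i - (H i).mulVec (xhat + u₀)) <
            ∑ i, f i (z i + a i - (H i).mulVec xhat)) ∧
        (∀ xhat : EuclideanSpace ℝ (Fin n),
          (∀ x : EuclideanSpace ℝ (Fin n),
            ∑ i, f i (z i + a i - (H i).mulVec xhat) ≤
              ∑ i, f i (z i + a i - (H i).mulVec x)) →
          r < ‖xhat‖) := by
  intro z r _
  obtain ⟨δ, hδ_pos, hslack⟩ := Finset.exists_pos_lt_sum_sub_of_lt hviol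
  obtain ⟨T, hT⟩ := ((eventually_all_finset I₀).2 fun i _ =>
    (hconv i).eventually_lt_map_sub_map_sub_of_tendsto (hC i u₀) (sub_lt_self _ hδ_pos)
      ((isCompact_closedBall (0 : EuclideanSpace ℝ (Fin n)) r).image
        (show Continuous fun x : EuclideanSpace ℝ (Fin n) => (H i).mulVec x by fun_prop))).exists
  set a : ∀ i : Fin m, Fin (mi i) → ℝ := fun i => if i ∈ I₀ then T • (H i).mulVec u₀ - z i else 0
  have hdecrease : ∀ xhat : EuclideanSpace ℝ (Fin n), ‖xhat‖ ≤ r →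
      ∑ i, f i (z i + a i - (H i).mulVec (xhat + u₀)) <
        ∑ i, f i (z i + a i - (H i).mulVec xhat) := by
    intro xhat hxhat
    refine Finset.sum_lt_sum_of_le_add_of_add_le I₀ (c := fun i => C i u₀)
      (c' := fun i => C i u₀ - δ) (fun i hi => ?_) (fun i hi => ?_) hslack
    · have hneg : Tendsto (fun t : ℝ => f i (t • -(H i).mulVec u₀) / t) atTop (𝓝 (C i u₀)) := by
        refine (hC i u₀).congr fun t => ?_
        rw [smul_neg, ← hsym i]
      simp only [a, if_neg hi, add_zero, Matrix.mulVec_add, ← sub_sub]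
      rw [sub_eq_add_neg (z i - _)]
      exact (hconv i).map_add_le_of_tendsto hneg _
    · have := hT i hi _ ⟨xhat, mem_closedBall_zero_iff.2 hxhat, rfl⟩
      simp only [a, if_pos hi, add_sub_cancel, Matrix.mulVec_add, sub_add_eq_sub_sub]
      linarith
  refine ⟨a, fun i hi => if_neg hi, hdecrease, fun xhat hmin => ?_⟩
  by_contra! hxhat
  exact (hdecrease xhat hxhat).not_ge (hmin _)

/-- Theorem 2 (necessary condition for robustness): if all the limits
`C i u = lim_{t→∞} f i (t • H i u) / t` exist but there are a unit vector `u₀`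
and an index set `I₀` with `|I₀| = p` such that
`∑_{i∈I₀} C i u₀ > ∑_{i∉I₀} C i u₀`, then for every `z` and every `r > 0`
there is a `(p,m)`-sparse attack supported on `I₀` under which every `x̂` with
`‖x̂‖ ≤ r` is strictly improved by `x̂ + u₀`; in particular no minimizer of the
attacked cost has norm at most `r`. -/
theorem necessary_condition_for_robustness (n m p : ℕ) (hpm : p < m)
    (mi : Fin m → ℕ)
    (H : ∀ i : Fin m, Matrix (Fin (mi i)) (Fin n) ℝ)
    (f : ∀ i : Fin m, (Fin (mi i) → ℝ) → ℝ)
    (hconv : ∀ i, ConvexOn ℝ Set.univ (f i))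
    (hsym : ∀ i u, f i u = f i (-u))
    (hnonneg : ∀ i u, 0 ≤ f i u)
    (hzero : ∀ i, f i 0 = 0)
    (C : Fin m → EuclideanSpace ℝ (Fin n) → ℝ)
    (hC : ∀ (i : Fin m) (u : EuclideanSpace ℝ (Fin n)),
      Filter.Tendsto (fun t : ℝ => f i (t • (H i).mulVec u) / t) Filter.atTop (nhds (C i u)))
    (u₀ : EuclideanSpace ℝ (Fin n)) (hu₀ : ‖u₀‖ = 1)
    (I₀ : Finset (Fin m)) (hI₀ : I₀.card = p)
    (hviol : ∑ i ∈ I₀ᶜ, C i u₀ < ∑ i ∈ I₀, C i u₀) :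
    ∀ (z : ∀ i : Fin m, Fin (mi i) → ℝ) (r : ℝ), 0 < r →
      ∃ a : ∀ i : Fin m, Fin (mi i) → ℝ,
        (∀ i ∉ I₀, a i = 0) ∧
        (∀ xhat : EuclideanSpace ℝ (Fin n), ‖xhat‖ ≤ r →
          ∑ i, f i (z i + a i - (H i).mulVec (xhat + u₀)) <
            ∑ i, f i (z i + a i - (H i).mulVec xhat)) ∧
        (∀ xhat : EuclideanSpace ℝ (Fin n),
          (∀ x : EuclideanSpace ℝ (Fin n),
            ∑ i, f i (z i + a i - (H i).mulVec xhat) ≤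
              ∑ i, f i (z i + a i - (H i).mulVec x)) →
          r < ‖xhat‖) :=
  necessary_condition_for_robustness_general n m mi H f hconv hsym C hC u₀ I₀ hviol
end

section
/- (Robustness of the geometric median / L₁ estimator.) Let m > 2p and consider m sensors each measuring the full state: H_i = Iₙ and f_i(v) = ‖v‖₂ for all i. Then for every z = (z_1,…,z_m) with z_i ∈ ℝⁿ there exists μ ≥ 0 such that for every (p,m)-sparse attack a, every minimizer x̂ of x̂ ↦ Σ_{i=1}^m ‖z_i + a_i − x̂‖₂ satisfies ‖x̂‖ ≤ μ. -/
/-- Robustness of the geometric median (L₁) estimator: if `m > 2p` and each of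
the `m` sensors measures the full state (`H i = I`, `f i = ‖·‖₂`), then for
every `z` there is a `μ ≥ 0` such that for every `(p,m)`-sparse attack `a`,
every minimizer of `x̂ ↦ ∑ i, ‖z i + a i - x̂‖₂` has norm at most `μ`. -/
theorem geometric_median_robust (n m p : ℕ) (hpm : 2 * p < m)
    (z : Fin m → EuclideanSpace ℝ (Fin n)) :
    ∃ μ : ℝ, 0 ≤ μ ∧
      ∀ a : Fin m → EuclideanSpace ℝ (Fin n),
        (∃ I : Finset (Fin m), I.card ≤ p ∧ ∀ i ∉ I, a i = 0) →
        ∀ xhat : EuclideanSpace ℝ (Fin n),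
          (∀ x : EuclideanSpace ℝ (Fin n),
            ∑ i, ‖z i + a i - xhat‖ ≤ ∑ i, ‖z i + a i - x‖) →
          ‖xhat‖ ≤ μ := by
  refine ⟨2 * ∑ i, ‖z i‖, by positivity, ?_⟩
  rintro a ⟨I, hIcard, hI0⟩ xhat hmin
  have key : ∑ i, ‖z i + a i - xhat‖ ≤ ∑ i, ‖z i + a i‖ := by
    simpa using hmin 0
  set J : Finset (Fin m) := Finset.univ \ I with hJ
  have hIsub : I ⊆ Finset.univ := Finset.subset_univ I
  -- split both sides
  have split : ∀ f : Fin m → ℝ, ∑ i, f i = ∑ i ∈ J, f i + ∑ i ∈ I, f i := by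
    intro f
    rw [hJ, Finset.sum_sdiff hIsub]
  -- lower bounds
  have hlow : ∑ i ∈ J, (‖xhat‖ - ‖z i‖) + ∑ i ∈ I, (‖z i + a i‖ - ‖xhat‖)
      ≤ ∑ i, ‖z i + a i - xhat‖ := by
    rw [split (fun i => ‖z i + a i - xhat‖)]
    gcongr with i hi i hi
    · have h0 : a i = 0 := hI0 i (by simpa [hJ] using (Finset.mem_sdiff.mp hi).2)
      have : ‖xhat‖ - ‖z i‖ ≤ ‖xhat - z i‖ := norm_sub_norm_le _ _
      calc ‖xhat‖ - ‖z i‖ ≤ ‖xhat - z i‖ := this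
        _ = ‖z i + a i - xhat‖ := by rw [h0, add_zero, norm_sub_rev]
    · exact norm_sub_norm_le _ _
  have hup : ∑ i, ‖z i + a i‖ = ∑ i ∈ J, ‖z i‖ + ∑ i ∈ I, ‖z i + a i‖ := by
    rw [split (fun i => ‖z i + a i‖)]
    congr 1
    apply Finset.sum_congr rfl
    intro i hi
    rw [hI0 i (by simpa [hJ] using (Finset.mem_sdiff.mp hi).2), add_zero]
  -- combine
  have hcomb : (J.card : ℝ) * ‖xhat‖ - I.card * ‖xhat‖ ≤ 2 * ∑ i ∈ J, ‖z i‖ := by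
    have := hlow.trans (key.trans_eq hup)
    simp only [Finset.sum_sub_distrib, Finset.sum_const, nsmul_eq_mul] at this
    linarith
  have hJcard : J.card = m - I.card := by
    rw [hJ, Finset.card_sdiff_of_subset hIsub, Finset.card_univ, Fintype.card_fin]
  have hIlem : I.card ≤ m := le_trans hIcard (by omega)
  have hcardR : (J.card : ℝ) = (m : ℝ) - I.card := by
    rw [hJcard]; push_cast [Nat.cast_sub hIlem]; ring
  have hsumle : ∑ i ∈ J, ‖z i‖ ≤ ∑ i, ‖z i‖ :=
    Finset.sum_le_sum_of_subset_of_nonneg (Finset.subset_univ J)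
      (fun i _ _ => norm_nonneg _)
  have hcoef : (1 : ℝ) ≤ (m : ℝ) - 2 * I.card := by
    have h : 2 * I.card + 1 ≤ m := by omega
    have h2 : ((2 * I.card + 1 : ℕ) : ℝ) ≤ (m : ℝ) := Nat.cast_le.mpr h
    push_cast at h2
    linarith
  have hx : (0 : ℝ) ≤ ‖xhat‖ := norm_nonneg _
  nlinarith [hcomb, hcardR, hsumle, hcoef, hx]
end

section
/- (Robustness of the coordinate-wise median estimator.) Let m > 2p and consider m sensors each measuring the full state: H_i = Iₙ and f_i(v) = ‖v‖₁ for all i. Then for every z = (z_1,…,z_m) with z_i ∈ ℝⁿ there exists μ ≥ 0 such that for every (p,m)-sparse attack a, every minimizer x̂ of x̂ ↦ Σ_{i=1}^m ‖z_i + a_i − x̂‖₁ satisfies ‖x̂‖ ≤ μ. -/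
/-!
The ℓ₁ objective separates over coordinates, so each coordinate of a minimiser `x̂` is a median
of the corresponding coordinates of the `z i + a i`. Let `M` bound every `|z i j|`. If `|x̂ j| > M`,
moving `x̂ j` to the nearer endpoint of `[-M, M]` lowers each of the more than `m / 2` unattacked
terms by the distance moved and raises each of the at most `p` attacked terms by at most that
distance, contradicting minimality. So every coordinate of `x̂` lies in `[-M, M]`, whatever the
attack, and `‖x̂‖ ≤ √n M`.
-/

open Finset

theorem exists_abs_sub_eq_add_of_lt_abs {M s : ℝ} (hs : M < |s|) :
    ∃ c, 0 < |c - s| ∧ ∀ t, |t| ≤ M → |t - s| = |t - c| + |c - s| := by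
  rcases lt_abs.mp hs with hs | hs
  · refine ⟨M, by rw [abs_of_neg (by linarith)]; linarith, fun t ht => ?_⟩
    have := (abs_le.mp ht).2
    rw [abs_of_nonpos (by linarith : t - s ≤ 0), abs_of_nonpos (by linarith : t - M ≤ 0),
      abs_of_neg (by linarith : M - s < 0)]
    ring
  · refine ⟨-M, by rw [abs_of_pos (by linarith)]; linarith, fun t ht => ?_⟩
    have := (abs_le.mp ht).1
    rw [abs_of_nonneg (by linarith : 0 ≤ t - s), abs_of_nonneg (by linarith : 0 ≤ t - -M),
      abs_of_pos (by linarith : 0 < -M - s)]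
    ring

theorem abs_le_of_forall_sum_abs_sub_le {ι : Type*} [Fintype ι] [DecidableEq ι] {y : ι → ℝ}
    {s M : ℝ} {I : Finset ι} (hI : 2 * #I < Fintype.card ι) (hy : ∀ i ∉ I, |y i| ≤ M)
    (hs : ∀ t, ∑ i, |y i - s| ≤ ∑ i, |y i - t|) : |s| ≤ M := by
  by_contra! hM
  obtain ⟨c, hd, hc⟩ := exists_abs_sub_eq_add_of_lt_abs hM
  set d := |c - s|
  have honest : ∀ i ∈ Iᶜ, d ≤ |y i - s| - |y i - c| := fun i hi => by
    rw [hc _ (hy i (mem_compl.mp hi))]; linarith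
  have attacked : ∀ i ∈ I, -d ≤ |y i - s| - |y i - c| := fun i _ => by
    have := abs_sub_abs_le_abs_sub (y i - c) (y i - s)
    rw [show y i - c - (y i - s) = -(c - s) by ring, abs_neg] at this
    linarith
  have hcard : (#I : ℝ) < #Iᶜ := by
    rw [card_compl]; exact_mod_cast (by omega : #I < Fintype.card ι - #I)
  have hdrop : 0 < ∑ i, (|y i - s| - |y i - c|) := by
    rw [← sum_add_sum_compl I]
    have h1 := card_nsmul_le_sum I _ _ attacked
    have h2 := card_nsmul_le_sum Iᶜ _ _ honest
    rw [nsmul_eq_mul] at h1 h2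
    nlinarith
  rw [sum_sub_distrib] at hdrop
  linarith [hs c]

theorem le_apply_of_forall_sum_le {κ α : Type*} [Fintype κ] [DecidableEq κ] {g : κ → α → ℝ}
    {x₀ : κ → α} (h : ∀ x : κ → α, ∑ k, g k (x₀ k) ≤ ∑ k, g k (x k)) (j : κ) (t : α) :
    g j (x₀ j) ≤ g j t := by
  have := h (Function.update x₀ j t)
  simp only [Function.apply_update (f := g), sum_update_of_mem (mem_univ j)] at this
  rw [Fintype.sum_eq_add_sum_compl j, compl_eq_univ_sdiff] at this
  linarith

theorem EuclideanSpace.sum_abs_sub_apply_le_of_forall_sum_sum_abs_sub_le {ι κ : Type*}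
    [Fintype ι] [Fintype κ] [DecidableEq κ] {y : ι → EuclideanSpace ℝ κ} {x₀ : EuclideanSpace ℝ κ}
    (h : ∀ x, ∑ i, ∑ k, |(y i - x₀) k| ≤ ∑ i, ∑ k, |(y i - x) k|) (j : κ) (t : ℝ) :
    ∑ i, |y i j - x₀ j| ≤ ∑ i, |y i j - t| :=
  le_apply_of_forall_sum_le (g := fun k u => ∑ i, |y i k - u|) (fun x => by
    simpa [sum_comm (γ := ι)] using h (WithLp.toLp 2 x)) j t

theorem EuclideanSpace.norm_le_sqrt_card_mul {κ : Type*} [Fintype κ] {x : EuclideanSpace ℝ κ}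
    {M : ℝ} (hM : 0 ≤ M) (hx : ∀ j, |x j| ≤ M) : ‖x‖ ≤ √(Fintype.card κ) * M := by
  rw [EuclideanSpace.norm_eq, ← Real.sqrt_sq hM, ← Real.sqrt_mul (Nat.cast_nonneg _)]
  gcongr
  calc ∑ j, ‖x j‖ ^ 2 ≤ ∑ _j : κ, M ^ 2 :=
        sum_le_sum fun j _ => pow_le_pow_left₀ (norm_nonneg _) (hx j) 2
    _ = _ := by simp

/-- Robustness of the coordinate-wise median estimator: if `m > 2p` and each of
the `m` sensors measures the full state (`H i = I`, `f i = ‖·‖₁`), then for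
every `z` there is a `μ ≥ 0` such that for every `(p,m)`-sparse attack `a`,
every minimizer of `x̂ ↦ ∑ i, ‖z i + a i - x̂‖₁` has norm at most `μ`. -/
theorem coordinatewise_median_robust (n m p : ℕ) (hpm : 2 * p < m)
    (z : Fin m → EuclideanSpace ℝ (Fin n)) :
    ∃ μ : ℝ, 0 ≤ μ ∧
      ∀ a : Fin m → EuclideanSpace ℝ (Fin n),
        (∃ I : Finset (Fin m), I.card ≤ p ∧ ∀ i ∉ I, a i = 0) →
        ∀ xhat : EuclideanSpace ℝ (Fin n),
          (∀ x : EuclideanSpace ℝ (Fin n),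
            ∑ i, ∑ j, |(z i + a i - xhat) j| ≤ ∑ i, ∑ j, |(z i + a i - x) j|) →
          ‖xhat‖ ≤ μ := by
  refine ⟨√n * ∑ i, ‖z i‖, by positivity, ?_⟩
  rintro a ⟨I, hIp, hIa⟩ xhat hmin
  have honest : ∀ j, ∀ i ∉ I, |(z i + a i) j| ≤ ∑ i, ‖z i‖ := fun j i hi => by
    rw [hIa i hi, add_zero]
    exact (PiLp.norm_apply_le (z i) j).trans
      (single_le_sum (fun i _ => norm_nonneg (z i)) (mem_univ i))
  have coord : ∀ j, |xhat j| ≤ ∑ i, ‖z i‖ := fun j =>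
    abs_le_of_forall_sum_abs_sub_le (by rw [Fintype.card_fin]; omega) (honest j)
      (EuclideanSpace.sum_abs_sub_apply_le_of_forall_sum_sum_abs_sub_le hmin j)
  simpa only [Fintype.card_fin] using
    EuclideanSpace.norm_le_sqrt_card_mul (by positivity) coord
end
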